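/- arXiv:1504.04667 — 3 statements merged into one kernel-verified Lean document; each statement's English description precedes it below -/
import Mathlib

section
/- Let X be a Banach space, A : ℤ → B(X) invertible operators admitting a nonuniform dichotomy with projections P_n: i.e., P_m 𝒜(m,n) = 𝒜(m,n) P_n, ‖𝒜(m,n)P_n‖ ≤ K (h_m/h_n)^a μ_{|n|}^ε for m ≥ n, and ‖𝒜(m,n)Q_n‖ ≤ K (k_n/k_m)^{-b} ν_{|n|}^ε for m ≤ n, where Q_n = id - P_n, a < 0 ≤ b. Suppose lim_{m→∞} k_m^{-b} ν_{|m|}^ε = 0. If (z_m)_{m ≥ n} is a bounded solution of z_{m+1} = (A_m + B_m) z_m with ‖B_m‖ ≤ c ν_{|m+1|}^{-ω-ε} and ∑_{τ≥n} ν_{|τ+1|}^{-ω} < ∞, then Q_n z_n = -∑_{τ=n}^{∞} 𝒜(n,τ+1) Q_{τ+1} B_τ z_τ, and consequently z_m = 𝒜(m,n) P_n z_n + ∑_{τ=n}^{m-1} 𝒜(m,τ+1) P_{τ+1} B_τ z_τ - ∑_{τ=m}^{∞} 𝒜(m,τ+1) Q_{τ+1} B_τ z_τ for all m ≥ n. 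-/
/-!
Pull the unstable component `Q = id - P` back to time `p`:
`y N := 𝓐 p (p + N) (Q (p + N) (z (p + N)))` satisfies
`y (N + 1) = y N + 𝓐 p (p + N + 1) (Q (p + N + 1) (B (p + N) (z (p + N))))`, so `Q p (z p) = y 0`
is `lim y N` minus the series. The dichotomy bound for `Q`, the boundedness of `z` and the decay of
`k m ^ (-b) * ν |m| ^ ε` give `y N → 0`; the bound on `‖B τ‖` cancels the factor `ν ^ ε` of the
dichotomy, so the series is dominated by `∑ ν ^ (-ω)`. The stable component `P m (z m)` is the
forward variation of constants formula.
-/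

open Filter

/-- A growth rate on `ℤ`. -/
def IsGrowthRate (u : ℤ → ℝ) : Prop :=
  StrictMono u ∧ u 0 = 1 ∧ Tendsto u atTop atTop ∧ Tendsto u atBot (nhds 0)

open Topology ContinuousLinearMap

lemma IsGrowthRate.pos {u : ℤ → ℝ} (hu : IsGrowthRate u) (m : ℤ) : 0 < u m := by
  have h0 : 0 ≤ u (m - 1) := by
    refine le_of_tendsto hu.2.2.2 ?_
    filter_upwards [eventually_le_atBot (m - 1)] with x hx
    exact hu.1.monotone hx
  linarith [hu.1 (sub_one_lt m)]

lemma IsGrowthRate.div_rpow_le_one {u : ℤ → ℝ} (hu : IsGrowthRate u) {m n : ℤ} (hmn : m ≤ n)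
    {b : ℝ} (hb : b ≤ 0) : (u n / u m) ^ b ≤ 1 :=
  Real.rpow_le_one_of_one_le_of_nonpos ((one_le_div (hu.pos m)).2 (hu.1.monotone hmn)) hb

lemma eq_neg_tsum_of_add_of_tendsto_zero {G : Type*} [AddCommGroup G] [TopologicalSpace G]
    [IsTopologicalAddGroup G] [T2Space G] {y f : ℕ → G} (hf : Summable f)
    (hy : ∀ N, y (N + 1) = y N + f N) (hlim : Tendsto y atTop (𝓝 0)) :
    y 0 = -∑' N, f N := by
  have hpartial : (fun N => ∑ i ∈ Finset.range N, f i) = fun N => y N - y 0 := by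
    funext N
    rw [← Finset.sum_range_sub]
    simp [hy]
  have hsum : HasSum f (0 - y 0) := by
    rw [hf.hasSum_iff_tendsto_nat, hpartial]
    exact hlim.sub_const _
  rw [hsum.tsum_eq, zero_sub, neg_neg]

lemma summable_int_add_of_le {E : Type*} [AddCommGroup E] [TopologicalSpace E]
    [IsTopologicalAddGroup E] {F : ℤ → E} {n p : ℤ}
    (hF : Summable fun τ : ℕ => F (n + τ)) (hnp : n ≤ p) : Summable fun τ : ℕ => F (p + τ) := by
  obtain ⟨d, rfl⟩ : ∃ d : ℕ, p = n + d := ⟨(p - n).toNat, by omega⟩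
  refine ((summable_nat_add_iff d).2 hF).congr fun τ => ?_
  push_cast
  ring_nf

section Evolution

variable {R X : Type*} [Semiring R] [TopologicalSpace X] [AddCommMonoid X] [Module R X]
  {𝓐 : ℤ → ℤ → X →L[R] X}

lemma evolution_apply_apply (hcoc : ∀ m n k : ℤ, (𝓐 m n).comp (𝓐 n k) = 𝓐 m k)
    (m n k : ℤ) (x : X) : 𝓐 m n (𝓐 n k x) = 𝓐 m k x := by
  rw [← hcoc m n k, comp_apply]

lemma variation_of_constants (hcoc : ∀ m n k : ℤ, (𝓐 m n).comp (𝓐 n k) = 𝓐 m k)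
    (hid : ∀ n : ℤ, 𝓐 n n = ContinuousLinearMap.id R X) {w g : ℤ → X} {p : ℤ}
    (hw : ∀ m, p ≤ m → w (m + 1) = 𝓐 (m + 1) m (w m) + g m) :
    ∀ m, p ≤ m → w m = 𝓐 m p (w p) + ∑ τ ∈ Finset.Ico p m, 𝓐 m (τ + 1) (g τ) := by
  refine Int.leInduction (by simp [hid]) fun m hpm ih => ?_
  rw [hw m hpm, ih, ← Finset.sum_Ico_add_eq_sum_Ico_add_one hpm, map_add, map_sum, hid]
  simp only [evolution_apply_apply hcoc, id_apply, add_assoc]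

lemma pullback_evolution_succ (hcoc : ∀ m n k : ℤ, (𝓐 m n).comp (𝓐 n k) = 𝓐 m k)
    {w : ℤ → X} {m : ℤ} {y : X} (hw : w (m + 1) = 𝓐 (m + 1) m (w m) + y) (p : ℤ) :
    𝓐 p (m + 1) (w (m + 1)) = 𝓐 p m (w m) + 𝓐 p (m + 1) y := by
  rw [hw, map_add, evolution_apply_apply hcoc]

lemma apply_succ_of_comm {L : ℤ → X →L[R] X}
    (hL : ∀ m n, (L m).comp (𝓐 m n) = (𝓐 m n).comp (L n)) {z : ℤ → X} {m : ℤ} {y : X}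
    (hz : z (m + 1) = 𝓐 (m + 1) m (z m) + y) :
    L (m + 1) (z (m + 1)) = 𝓐 (m + 1) m (L m (z m)) + L (m + 1) y := by
  rw [hz, map_add, ← comp_apply, hL, comp_apply]

end Evolution

lemma id_sub_comp_comm {R X : Type*} [Ring R] [TopologicalSpace X] [AddCommGroup X] [Module R X]
    [IsTopologicalAddGroup X] {𝓐 : ℤ → ℤ → X →L[R] X} {P : ℤ → X →L[R] X}
    (hP : ∀ m n, (P m).comp (𝓐 m n) = (𝓐 m n).comp (P n)) (m n : ℤ) :
    (ContinuousLinearMap.id R X - P m).comp (𝓐 m n)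
      = (𝓐 m n).comp (ContinuousLinearMap.id R X - P n) := by
  rw [sub_comp, comp_sub, hP, id_comp, comp_id]

section Dichotomy

variable {X : Type*} [NormedAddCommGroup X] [NormedSpace ℝ X] {𝓐 : ℤ → ℤ → X →L[ℝ] X}
  {Q : ℤ → X →L[ℝ] X} {k ν : ℤ → ℝ} {K b ε : ℝ}

lemma norm_evolution_proj_apply_le (hk : IsGrowthRate k) (hν : IsGrowthRate ν) (hK : 0 ≤ K)
    (hb : 0 ≤ b)
    (hbound : ∀ m n, m ≤ n → ‖(𝓐 m n).comp (Q n)‖ ≤ K * (k n / k m) ^ (-b) * ν |n| ^ ε)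
    {p σ : ℤ} (hpσ : p ≤ σ) {C ω : ℝ} {y : X} (hy : ‖y‖ ≤ C * ν |σ| ^ (-(ω + ε))) :
    ‖𝓐 p σ (Q σ y)‖ ≤ K * C * ν |σ| ^ (-ω) := by
  have hνσ := hν.pos |σ|
  have hnorm : ‖(𝓐 p σ).comp (Q σ)‖ ≤ K * ν |σ| ^ ε :=
    calc ‖(𝓐 p σ).comp (Q σ)‖ ≤ K * (k σ / k p) ^ (-b) * ν |σ| ^ ε := hbound p σ hpσ
      _ ≤ K * 1 * ν |σ| ^ ε := by
        have := hk.div_rpow_le_one hpσ (neg_nonpos.2 hb)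
        gcongr
      _ = K * ν |σ| ^ ε := by rw [mul_one]
  calc ‖𝓐 p σ (Q σ y)‖ ≤ K * ν |σ| ^ ε * (C * ν |σ| ^ (-(ω + ε))) :=
        ((𝓐 p σ).comp (Q σ)).le_of_opNorm_le_of_le hnorm hy
    _ = K * C * ν |σ| ^ (-ω) := by
        rw [mul_mul_mul_comm, ← Real.rpow_add hνσ]
        ring_nf

lemma tendsto_evolution_proj_apply_zero (hk : IsGrowthRate k)
    (hbound : ∀ m n, m ≤ n → ‖(𝓐 m n).comp (Q n)‖ ≤ K * (k n / k m) ^ (-b) * ν |n| ^ ε)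
    (hlim : Tendsto (fun m : ℤ => k m ^ (-b) * ν |m| ^ ε) atTop (𝓝 0)) {p : ℤ} {z : ℤ → X}
    {M : ℝ} (hbdd : ∀ m, p ≤ m → ‖z m‖ ≤ M) :
    Tendsto (fun m => 𝓐 p m (Q m (z m))) atTop (𝓝 0) := by
  refine squeeze_zero_norm' ?_ (by simpa using hlim.const_mul (K * M / k p ^ (-b)))
  filter_upwards [eventually_ge_atTop p] with m hpm
  calc ‖𝓐 p m (Q m (z m))‖ ≤ K * (k m / k p) ^ (-b) * ν |m| ^ ε * M :=
        ((𝓐 p m).comp (Q m)).le_of_opNorm_le_of_le (hbound p m hpm) (hbdd m hpm)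
    _ = K * M / k p ^ (-b) * (k m ^ (-b) * ν |m| ^ ε) := by
        rw [Real.div_rpow (hk.pos m).le (hk.pos p).le]
        ring

theorem proj_apply_eq_neg_tsum [CompleteSpace X]
    (hcoc : ∀ m n k : ℤ, (𝓐 m n).comp (𝓐 n k) = 𝓐 m k)
    (hid : ∀ n : ℤ, 𝓐 n n = ContinuousLinearMap.id ℝ X)
    (hQ : ∀ m n, (Q m).comp (𝓐 m n) = (𝓐 m n).comp (Q n))
    (hk : IsGrowthRate k) (hν : IsGrowthRate ν) (hK : 0 ≤ K) (hb : 0 ≤ b)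
    (hbound : ∀ m n, m ≤ n → ‖(𝓐 m n).comp (Q n)‖ ≤ K * (k n / k m) ^ (-b) * ν |n| ^ ε)
    (hlim : Tendsto (fun m : ℤ => k m ^ (-b) * ν |m| ^ ε) atTop (𝓝 0))
    {B : ℤ → X →L[ℝ] X} {c ω : ℝ} (hB : ∀ m : ℤ, ‖B m‖ ≤ c * ν |m + 1| ^ (-(ω + ε)))
    {p : ℤ} (hsum : Summable (fun τ : ℕ => ν |p + τ + 1| ^ (-ω)))
    {z : ℤ → X} {M : ℝ} (hbdd : ∀ m, p ≤ m → ‖z m‖ ≤ M)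
    (hz : ∀ m, p ≤ m → z (m + 1) = 𝓐 (m + 1) m (z m) + B m (z m)) :
    Q p (z p) = -∑' τ : ℕ, 𝓐 p (p + τ + 1) (Q (p + τ + 1) (B (p + τ) (z (p + τ)))) := by
  have hterm (τ : ℕ) : ‖𝓐 p (p + τ + 1) (Q (p + τ + 1) (B (p + τ) (z (p + τ))))‖
      ≤ K * (c * M) * ν |p + τ + 1| ^ (-ω) := by
    refine norm_evolution_proj_apply_le hk hν hK hb hbound (by omega) ?_
    calc ‖B (p + τ) (z (p + τ))‖ ≤ c * ν |p + τ + 1| ^ (-(ω + ε)) * M :=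
          (B (p + τ)).le_of_opNorm_le_of_le (hB _) (hbdd _ (by omega))
      _ = c * M * ν |p + τ + 1| ^ (-(ω + ε)) := by ring
  have hrec (N : ℕ) : 𝓐 p (p + (N + 1 : ℕ)) (Q (p + (N + 1 : ℕ)) (z (p + (N + 1 : ℕ))))
      = 𝓐 p (p + N) (Q (p + N) (z (p + N)))
        + 𝓐 p (p + N + 1) (Q (p + N + 1) (B (p + N) (z (p + N)))) := by
    rw [Nat.cast_succ, ← add_assoc]
    exact pullback_evolution_succ hcoc (w := fun m => Q m (z m))
      (apply_succ_of_comm hQ (hz (p + N) (by omega))) p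
  have hpN : Tendsto (fun N : ℕ => p + (N : ℤ)) atTop atTop :=
    tendsto_atTop_add_const_left _ p tendsto_natCast_atTop_atTop
  simpa [hid] using eq_neg_tsum_of_add_of_tendsto_zero
    (Summable.of_norm_bounded (hsum.mul_left _) hterm) hrec
    ((tendsto_evolution_proj_apply_zero hk hbound hlim hbdd).comp hpN)

end Dichotomy

theorem stmt10_general {X : Type*} [NormedAddCommGroup X] [NormedSpace ℝ X] [CompleteSpace X]
    (A : ℤ → X →L[ℝ] X) (𝓐 : ℤ → ℤ → X →L[ℝ] X)
    (hcoc : ∀ m n k : ℤ, (𝓐 m n).comp (𝓐 n k) = 𝓐 m k)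
    (hid : ∀ n : ℤ, 𝓐 n n = ContinuousLinearMap.id ℝ X)
    (hstep : ∀ m : ℤ, 𝓐 (m + 1) m = A m)
    (P : ℤ → X →L[ℝ] X)
    (hcomm : ∀ m n, (P m).comp (𝓐 m n) = (𝓐 m n).comp (P n))
    (k ν : ℤ → ℝ) (hk : IsGrowthRate k) (hν : IsGrowthRate ν)
    (K b ε : ℝ) (hK : 0 < K) (hb : 0 ≤ b)
    (hbound2 : ∀ m n, m ≤ n →
      ‖(𝓐 m n).comp (ContinuousLinearMap.id ℝ X - P n)‖ ≤ K * (k n / k m) ^ (-b) * ν |n| ^ ε)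
    (hlim : Tendsto (fun m : ℤ => k m ^ (-b) * ν |m| ^ ε) atTop (nhds 0))
    (B : ℤ → X →L[ℝ] X) (c ω : ℝ) (hB : ∀ m : ℤ, ‖B m‖ ≤ c * ν |m + 1| ^ (-(ω + ε)))
    (n : ℤ)
    (hsum : Summable (fun τ : ℕ => ν |n + τ + 1| ^ (-ω)))
    (z : ℤ → X) (M : ℝ) (hbdd : ∀ m, n ≤ m → ‖z m‖ ≤ M)
    (hz : ∀ m, n ≤ m → z (m + 1) = A m (z m) + B m (z m)) :
    (ContinuousLinearMap.id ℝ X - P n) (z n)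
        = -∑' τ : ℕ, (𝓐 n (n + τ + 1))
            ((ContinuousLinearMap.id ℝ X - P (n + τ + 1)) (B (n + τ) (z (n + τ)))) ∧
      ∀ m, n ≤ m → z m = (𝓐 m n) (P n (z n))
        + ∑ τ ∈ Finset.Ico n m, (𝓐 m (τ + 1)) (P (τ + 1) (B τ (z τ)))
        - ∑' τ : ℕ, (𝓐 m (m + τ + 1))
            ((ContinuousLinearMap.id ℝ X - P (m + τ + 1)) (B (m + τ) (z (m + τ)))) := by
  have hz' (m : ℤ) (hm : n ≤ m) : z (m + 1) = 𝓐 (m + 1) m (z m) + B m (z m) := by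
    rw [hstep, hz m hm]
  have backward (m : ℤ) (hm : n ≤ m) :=
    proj_apply_eq_neg_tsum hcoc hid (id_sub_comp_comm hcomm) hk hν hK.le hb hbound2 hlim hB
      (summable_int_add_of_le (F := fun j => ν |j + 1| ^ (-ω)) hsum hm)
      (fun j hj => hbdd j (hm.trans hj)) (fun j hj => hz' j (hm.trans hj))
  refine ⟨backward n le_rfl, fun m hm => ?_⟩
  have forward := variation_of_constants hcoc hid (w := fun j => P j (z j))
    (g := fun j => P (j + 1) (B j (z j))) (fun j hj => apply_succ_of_comm hcomm (hz' j hj)) m hm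
  rw [← forward, sub_eq_add_neg, ← backward m hm]
  simp

theorem stmt10 {X : Type*} [NormedAddCommGroup X] [NormedSpace ℝ X] [CompleteSpace X]
    (A : ℤ → X →L[ℝ] X) (𝓐 : ℤ → ℤ → X →L[ℝ] X)
    (hcoc : ∀ m n k : ℤ, (𝓐 m n).comp (𝓐 n k) = 𝓐 m k)
    (hid : ∀ n : ℤ, 𝓐 n n = ContinuousLinearMap.id ℝ X)
    (hstep : ∀ m : ℤ, 𝓐 (m + 1) m = A m)
    (P : ℤ → X →L[ℝ] X)
    (hproj : ∀ n, (P n).comp (P n) = P n)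
    (hcomm : ∀ m n, (P m).comp (𝓐 m n) = (𝓐 m n).comp (P n))
    (h k μ ν : ℤ → ℝ) (hh : IsGrowthRate h) (hk : IsGrowthRate k)
    (hμ : IsGrowthRate μ) (hν : IsGrowthRate ν)
    (K a b ε : ℝ) (hK : 0 < K) (ha : a < 0) (hb : 0 ≤ b) (hε : 0 ≤ ε)
    (hbound1 : ∀ m n, n ≤ m → ‖(𝓐 m n).comp (P n)‖ ≤ K * (h m / h n) ^ a * μ |n| ^ ε)
    (hbound2 : ∀ m n, m ≤ n →
      ‖(𝓐 m n).comp (ContinuousLinearMap.id ℝ X - P n)‖ ≤ K * (k n / k m) ^ (-b) * ν |n| ^ ε)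
    (hlim : Tendsto (fun m : ℤ => k m ^ (-b) * ν |m| ^ ε) atTop (nhds 0))
    (B : ℤ → X →L[ℝ] X) (c ω : ℝ) (hc : 0 < c) (hω : 1 < ω)
    (hB : ∀ m : ℤ, ‖B m‖ ≤ c * ν |m + 1| ^ (-(ω + ε)))
    (n : ℤ)
    (hsum : Summable (fun τ : ℕ => ν |n + τ + 1| ^ (-ω)))
    (z : ℤ → X) (M : ℝ) (hbdd : ∀ m, n ≤ m → ‖z m‖ ≤ M)
    (hz : ∀ m, n ≤ m → z (m + 1) = A m (z m) + B m (z m)) :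
    (ContinuousLinearMap.id ℝ X - P n) (z n)
        = -∑' τ : ℕ, (𝓐 n (n + τ + 1))
            ((ContinuousLinearMap.id ℝ X - P (n + τ + 1)) (B (n + τ) (z (n + τ)))) ∧
      ∀ m, n ≤ m → z m = (𝓐 m n) (P n (z n))
        + ∑ τ ∈ Finset.Ico n m, (𝓐 m (τ + 1)) (P (τ + 1) (B τ (z τ)))
        - ∑' τ : ℕ, (𝓐 m (m + τ + 1))
            ((ContinuousLinearMap.id ℝ X - P (m + τ + 1)) (B (m + τ) (z (m + τ)))) :=
  stmt10_general A 𝓐 hcoc hid hstep P hcomm k ν hk hν K b ε hK hb hbound2 hlim B c ω hB n hsum z M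
    hbdd hz
end

section
/- In the setting of the roughness theorem, the unique fixed point U_λ of the contraction J₁^λ depends Lipschitz-continuously on the parameter λ: if ‖B_m(λ₁) − B_m(λ₂)‖ ≤ c |λ₁−λ₂| · min{(h_{m+1}/h_m)^a μ_{|m+1|}^{-ω-ε}, ν_{|m+1|}^{-ω-ε}} for all m, then ‖U_{λ₁} − U_{λ₂}‖₁ ≤ [K̂ K c (N₁+N₂)/(1 − K c (N₁+N₂))] · |λ₁−λ₂|, where K̂ = K/(1 − K c (N₁+N₂)). -/
open Filter

/-- The weighted quantities whose supremum defines the norm `‖·‖₁`. -/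
def weightSet {X : Type*} [NormedAddCommGroup X] [NormedSpace ℝ X]
    (h μ : ℤ → ℝ) (a ε : ℝ) (U : ℤ → ℤ → X →L[ℝ] X) : Set ℝ :=
  (fun p : ℤ × ℤ => ‖U p.1 p.2‖ * (h p.1 / h p.2) ^ (-a) * μ |p.2| ^ (-ε)) '' {p | p.2 ≤ p.1}

/-- Membership in the Banach space `Ω`: the weighted norm is finite. -/
def InOmega {X : Type*} [NormedAddCommGroup X] [NormedSpace ℝ X]
    (h μ : ℤ → ℝ) (a ε : ℝ) (U : ℤ → ℤ → X →L[ℝ] X) : Prop :=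
  BddAbove (weightSet h μ a ε U)

/-- The norm `‖U‖₁ = sup_{m ≥ n} ‖U(m,n)‖ (h m / h n)^{-a} μ_{|n|}^{-ε}`. -/
noncomputable def norm1 {X : Type*} [NormedAddCommGroup X] [NormedSpace ℝ X]
    (h μ : ℤ → ℝ) (a ε : ℝ) (U : ℤ → ℤ → X →L[ℝ] X) : ℝ :=
  sSup (weightSet h μ a ε U)

/-- The fixed point operator `J₁^λ`. -/
noncomputable def Jop {X : Type*} [NormedAddCommGroup X] [NormedSpace ℝ X]
    [CompleteSpace X]
    (𝓐 : ℤ → ℤ → X →L[ℝ] X) (P B : ℤ → X →L[ℝ] X)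
    (U : ℤ → ℤ → X →L[ℝ] X) (m n : ℤ) : X →L[ℝ] X :=
  (𝓐 m n).comp (P n)
    + ∑ τ ∈ Finset.Ico n m, (𝓐 m (τ + 1)).comp ((P (τ + 1)).comp ((B τ).comp (U τ n)))
    - ∑' τ : ℕ, (𝓐 m (m + τ + 1)).comp
        (((ContinuousLinearMap.id ℝ X - P (m + τ + 1))).comp
          ((B (m + τ)).comp (U (m + τ) n)))

lemma growth_pos {u : ℤ → ℝ} (hu : IsGrowthRate u) (n : ℤ) : 0 < u n := by
  have h0 : ∀ m : ℤ, 0 ≤ u m := by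
    intro m
    exact le_of_tendsto hu.2.2.2 ((Filter.eventually_le_atBot m).mono fun j hj => hu.1.monotone hj)
  exact lt_of_le_of_lt (h0 (n - 1)) (hu.1 (by omega))

lemma growth_one_le {u : ℤ → ℝ} (hu : IsGrowthRate u) (n : ℤ) : 1 ≤ u |n| := by
  have := hu.1.monotone (abs_nonneg n)
  rwa [hu.2.1] at this

section KeyEst

variable {X : Type*} [NormedAddCommGroup X] [NormedSpace ℝ X] [CompleteSpace X]

/-- The main estimate: summability of the tail series and the bound for the
finite-sum-minus-tail expression. -/
lemma keyEst
    (𝓐 : ℤ → ℤ → X →L[ℝ] X) (P : ℤ → X →L[ℝ] X)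
    (h μ ν : ℤ → ℝ)
    (hhpos : ∀ n, 0 < h n) (hhmono : Monotone h)
    (hμpos : ∀ n, 0 < μ n) (hνpos : ∀ n, 0 < ν n)
    (hμ1 : ∀ n : ℤ, 1 ≤ μ |n|) (hν1 : ∀ n : ℤ, 1 ≤ ν |n|)
    (K a ε ω : ℝ) (hK : 0 < K) (ha : a ≤ 0) (hε : 0 ≤ ε)
    (hbound1 : ∀ m n, n ≤ m → ‖(𝓐 m n).comp (P n)‖ ≤ K * (h m / h n) ^ a * μ |n| ^ ε)
    (hbound2 : ∀ m n, m ≤ n →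
      ‖(𝓐 m n).comp (ContinuousLinearMap.id ℝ X - P n)‖ ≤ K * ν |n| ^ ε)
    (C : ℤ → X →L[ℝ] X) (γ : ℝ) (hγ : 0 ≤ γ)
    (hC : ∀ m, ‖C m‖ ≤
      γ * min ((h (m + 1) / h m) ^ a * μ |m + 1| ^ (-(ω + ε))) (ν |m + 1| ^ (-(ω + ε))))
    (V : ℤ → ℤ → X →L[ℝ] X) (M : ℝ) (hM : 0 ≤ M)
    (hV : ∀ m n, n ≤ m → ‖V m n‖ ≤ M * (h m / h n) ^ a * μ |n| ^ ε)
    (N₁ N₂ : ℝ)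
    (hN₁ : ∀ m : ℤ, Summable (fun τ : ℕ => μ |m - τ| ^ (-ω)) ∧
      (∑' τ : ℕ, μ |m - τ| ^ (-ω)) * ν |m| ^ ε ≤ N₁)
    (hN₂ : ∀ m : ℤ, Summable (fun τ : ℕ => ν |m + τ + 1| ^ (-ω)) ∧
      μ |m| ^ ε * (∑' τ : ℕ, ν |m + τ + 1| ^ (-ω)) ≤ N₂)
    (m n : ℤ) (hmn : n ≤ m) :
    Summable (fun τ : ℕ => (𝓐 m (m + τ + 1)).comp
        ((ContinuousLinearMap.id ℝ X - P (m + τ + 1)).comp ((C (m + τ)).comp (V (m + τ) n)))) ∧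
    ‖(∑ τ ∈ Finset.Ico n m, (𝓐 m (τ + 1)).comp ((P (τ + 1)).comp ((C τ).comp (V τ n))))
      - ∑' τ : ℕ, (𝓐 m (m + τ + 1)).comp
        ((ContinuousLinearMap.id ℝ X - P (m + τ + 1)).comp ((C (m + τ)).comp (V (m + τ) n)))‖
      ≤ K * γ * M * (N₁ + N₂) * ((h m / h n) ^ a * μ |n| ^ ε) := by
  set W : ℝ := (h m / h n) ^ a * μ |n| ^ ε with hWdef
  have hWpos : 0 < W := by
    apply mul_pos
    · exact Real.rpow_pos_of_pos (div_pos (hhpos m) (hhpos n)) a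
    · exact Real.rpow_pos_of_pos (hμpos _) ε
  have hN1pos : (0:ℝ) ≤ ∑' τ : ℕ, μ |m - τ| ^ (-ω) :=
    tsum_nonneg fun τ => (Real.rpow_pos_of_pos (hμpos _) _).le
  have hN2pos : (0:ℝ) ≤ ∑' τ : ℕ, ν |m + τ + 1| ^ (-ω) :=
    tsum_nonneg fun τ => (Real.rpow_pos_of_pos (hνpos _) _).le
  have hsum1 : (∑' τ : ℕ, μ |m - τ| ^ (-ω)) ≤ N₁ := by
    have h1 := (hN₁ m).2
    have h2 : (1:ℝ) ≤ ν |m| ^ ε := Real.one_le_rpow (hν1 m) hε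
    nlinarith
  have hsum2 : (∑' τ : ℕ, ν |m + τ + 1| ^ (-ω)) ≤ N₂ := by
    have h1 := (hN₂ m).2
    have h2 : (1:ℝ) ≤ μ |m| ^ ε := Real.one_le_rpow (hμ1 m) hε
    nlinarith
  -- tail term bound
  set f : ℕ → X →L[ℝ] X := fun τ => (𝓐 m (m + τ + 1)).comp
      ((ContinuousLinearMap.id ℝ X - P (m + τ + 1)).comp ((C (m + τ)).comp (V (m + τ) n)))
    with hfdef
  have htail : ∀ τ : ℕ, ‖f τ‖ ≤ (K * γ * M * W) * ν |m + τ + 1| ^ (-ω) := by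
    intro τ
    have h1 : ‖f τ‖ ≤ ‖(𝓐 m (m + τ + 1)).comp (ContinuousLinearMap.id ℝ X - P (m + τ + 1))‖
        * (‖C (m + τ)‖ * ‖V (m + τ) n‖) := by
      rw [hfdef]
      simp only [← ContinuousLinearMap.comp_assoc]
      calc ‖(((𝓐 m (m + τ + 1)).comp (ContinuousLinearMap.id ℝ X - P (m + τ + 1))).comp
              (C (m + τ))).comp (V (m + τ) n)‖
          ≤ ‖((𝓐 m (m + τ + 1)).comp (ContinuousLinearMap.id ℝ X - P (m + τ + 1))).comp
              (C (m + τ))‖ * ‖V (m + τ) n‖ := ContinuousLinearMap.opNorm_comp_le _ _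
        _ ≤ ‖(𝓐 m (m + τ + 1)).comp (ContinuousLinearMap.id ℝ X - P (m + τ + 1))‖ * ‖C (m + τ)‖
              * ‖V (m + τ) n‖ := by
            gcongr
            exact ContinuousLinearMap.opNorm_comp_le _ _
        _ = _ := by ring
    have h2 : ‖(𝓐 m (m + τ + 1)).comp (ContinuousLinearMap.id ℝ X - P (m + τ + 1))‖
        ≤ K * ν |m + τ + 1| ^ ε := hbound2 m (m + τ + 1) (by omega)
    have h3 : ‖C (m + τ)‖ ≤ γ * ν |m + τ + 1| ^ (-(ω + ε)) := by
      have := hC (m + τ)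
      have hmin : min ((h (m + τ + 1) / h (m + τ)) ^ a * μ |m + τ + 1| ^ (-(ω + ε)))
          (ν |m + τ + 1| ^ (-(ω + ε))) ≤ ν |m + τ + 1| ^ (-(ω + ε)) := min_le_right _ _
      calc ‖C (m + τ)‖ ≤ γ * min ((h (m + τ + 1) / h (m + τ)) ^ a * μ |m + τ + 1| ^ (-(ω + ε)))
            (ν |m + τ + 1| ^ (-(ω + ε))) := this
        _ ≤ γ * ν |m + τ + 1| ^ (-(ω + ε)) := by
            exact mul_le_mul_of_nonneg_left hmin hγ
    have h4 : ‖V (m + τ) n‖ ≤ M * (h m / h n) ^ a * μ |n| ^ ε := by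
      have hVle := hV (m + τ) n (by omega)
      have hratio : (h (m + τ) / h n) ^ a ≤ (h m / h n) ^ a := by
        apply Real.rpow_le_rpow_of_nonpos (div_pos (hhpos m) (hhpos n)) _ ha
        exact div_le_div_of_nonneg_right (hhmono (by omega)) (hhpos n).le
      calc ‖V (m + τ) n‖ ≤ M * (h (m + τ) / h n) ^ a * μ |n| ^ ε := hVle
        _ ≤ M * (h m / h n) ^ a * μ |n| ^ ε := by
            gcongr
            exact (Real.rpow_pos_of_pos (hμpos _) ε).le
    have hνε : ν |m + τ + 1| ^ ε * ν |m + τ + 1| ^ (-(ω + ε)) = ν |m + τ + 1| ^ (-ω) := by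
      rw [← Real.rpow_add (hνpos _)]; ring_nf
    calc ‖f τ‖ ≤ ‖(𝓐 m (m + τ + 1)).comp (ContinuousLinearMap.id ℝ X - P (m + τ + 1))‖
          * (‖C (m + τ)‖ * ‖V (m + τ) n‖) := h1
      _ ≤ (K * ν |m + τ + 1| ^ ε) * ((γ * ν |m + τ + 1| ^ (-(ω + ε)))
            * (M * (h m / h n) ^ a * μ |n| ^ ε)) := by
          have hin : ‖C (m + τ)‖ * ‖V (m + τ) n‖ ≤ (γ * ν |m + τ + 1| ^ (-(ω + ε)))
              * (M * (h m / h n) ^ a * μ |n| ^ ε) :=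
            mul_le_mul h3 h4 (norm_nonneg _) (mul_nonneg hγ
              (Real.rpow_pos_of_pos (hνpos _) _).le)
          exact mul_le_mul h2 hin (mul_nonneg (norm_nonneg _) (norm_nonneg _))
            (mul_nonneg hK.le (Real.rpow_pos_of_pos (hνpos _) _).le)
      _ = (K * γ * M * W) * (ν |m + τ + 1| ^ ε * ν |m + τ + 1| ^ (-(ω + ε))) := by
          rw [hWdef]; ring
      _ = (K * γ * M * W) * ν |m + τ + 1| ^ (-ω) := by rw [hνε]
  have hsummable_norm : Summable (fun τ : ℕ => ‖f τ‖) :=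
    Summable.of_nonneg_of_le (fun τ => norm_nonneg _) htail ((hN₂ m).1.mul_left _)
  have hsummable_f : Summable f := Summable.of_norm hsummable_norm
  refine ⟨hsummable_f, ?_⟩
  -- bound on the tail sum
  have hTbound : ‖∑' τ : ℕ, f τ‖ ≤ K * γ * M * W * N₂ := by
    calc ‖∑' τ : ℕ, f τ‖ ≤ ∑' τ : ℕ, ‖f τ‖ := norm_tsum_le_tsum_norm hsummable_norm
      _ ≤ ∑' τ : ℕ, (K * γ * M * W) * ν |m + τ + 1| ^ (-ω) :=
          Summable.tsum_le_tsum htail hsummable_norm ((hN₂ m).1.mul_left _)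
      _ = (K * γ * M * W) * ∑' τ : ℕ, ν |m + τ + 1| ^ (-ω) := tsum_mul_left
      _ ≤ K * γ * M * W * N₂ := by
          apply mul_le_mul_of_nonneg_left hsum2
          positivity
  -- bound on the finite sum
  have hterm : ∀ τ ∈ Finset.Ico n m,
      ‖(𝓐 m (τ + 1)).comp ((P (τ + 1)).comp ((C τ).comp (V τ n)))‖
        ≤ (K * γ * M * W) * μ |τ + 1| ^ (-ω) := by
    intro τ hτ
    rw [Finset.mem_Ico] at hτ
    have h1 : ‖(𝓐 m (τ + 1)).comp ((P (τ + 1)).comp ((C τ).comp (V τ n)))‖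
        ≤ ‖(𝓐 m (τ + 1)).comp (P (τ + 1))‖ * (‖C τ‖ * ‖V τ n‖) := by
      simp only [← ContinuousLinearMap.comp_assoc]
      calc ‖(((𝓐 m (τ + 1)).comp (P (τ + 1))).comp (C τ)).comp (V τ n)‖
          ≤ ‖((𝓐 m (τ + 1)).comp (P (τ + 1))).comp (C τ)‖ * ‖V τ n‖ :=
            ContinuousLinearMap.opNorm_comp_le _ _
        _ ≤ ‖(𝓐 m (τ + 1)).comp (P (τ + 1))‖ * ‖C τ‖ * ‖V τ n‖ := by
            gcongr
            exact ContinuousLinearMap.opNorm_comp_le _ _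
        _ = _ := by ring
    have h2 : ‖(𝓐 m (τ + 1)).comp (P (τ + 1))‖ ≤ K * (h m / h (τ + 1)) ^ a * μ |τ + 1| ^ ε :=
      hbound1 m (τ + 1) (by omega)
    have h3 : ‖C τ‖ ≤ γ * ((h (τ + 1) / h τ) ^ a * μ |τ + 1| ^ (-(ω + ε))) := by
      calc ‖C τ‖ ≤ γ * min ((h (τ + 1) / h τ) ^ a * μ |τ + 1| ^ (-(ω + ε)))
            (ν |τ + 1| ^ (-(ω + ε))) := hC τ
        _ ≤ γ * ((h (τ + 1) / h τ) ^ a * μ |τ + 1| ^ (-(ω + ε))) :=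
            mul_le_mul_of_nonneg_left (min_le_left _ _) hγ
    have h4 : ‖V τ n‖ ≤ M * (h τ / h n) ^ a * μ |n| ^ ε := hV τ n hτ.1
    have hratio : (h m / h (τ + 1)) ^ a * ((h (τ + 1) / h τ) ^ a * (h τ / h n) ^ a)
        = (h m / h n) ^ a := by
      rw [← Real.mul_rpow (div_pos (hhpos _) (hhpos _)).le (div_pos (hhpos _) (hhpos _)).le,
        ← Real.mul_rpow (div_pos (hhpos _) (hhpos _)).le
          (mul_pos (div_pos (hhpos _) (hhpos _)) (div_pos (hhpos _) (hhpos _))).le]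
      congr 1
      rw [div_mul_div_cancel₀ (hhpos τ).ne', div_mul_div_cancel₀ (hhpos (τ + 1)).ne']
    have hμτ : μ |τ + 1| ^ ε * μ |τ + 1| ^ (-(ω + ε)) = μ |τ + 1| ^ (-ω) := by
      rw [← Real.rpow_add (hμpos _)]; ring_nf
    calc ‖(𝓐 m (τ + 1)).comp ((P (τ + 1)).comp ((C τ).comp (V τ n)))‖
        ≤ ‖(𝓐 m (τ + 1)).comp (P (τ + 1))‖ * (‖C τ‖ * ‖V τ n‖) := h1
      _ ≤ (K * (h m / h (τ + 1)) ^ a * μ |τ + 1| ^ ε)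
            * ((γ * ((h (τ + 1) / h τ) ^ a * μ |τ + 1| ^ (-(ω + ε))))
              * (M * (h τ / h n) ^ a * μ |n| ^ ε)) := by
          have hin : ‖C τ‖ * ‖V τ n‖ ≤ (γ * ((h (τ + 1) / h τ) ^ a * μ |τ + 1| ^ (-(ω + ε))))
              * (M * (h τ / h n) ^ a * μ |n| ^ ε) :=
            mul_le_mul h3 h4 (norm_nonneg _) (mul_nonneg hγ (mul_nonneg
              (Real.rpow_pos_of_pos (div_pos (hhpos _) (hhpos _)) _).le
              (Real.rpow_pos_of_pos (hμpos _) _).le))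
          exact mul_le_mul h2 hin (mul_nonneg (norm_nonneg _) (norm_nonneg _))
            (mul_nonneg (mul_nonneg hK.le
              (Real.rpow_pos_of_pos (div_pos (hhpos _) (hhpos _)) _).le)
              (Real.rpow_pos_of_pos (hμpos _) _).le)
      _ = (K * γ * M * (μ |n| ^ ε))
            * ((h m / h (τ + 1)) ^ a * ((h (τ + 1) / h τ) ^ a * (h τ / h n) ^ a))
            * (μ |τ + 1| ^ ε * μ |τ + 1| ^ (-(ω + ε))) := by ring
      _ = (K * γ * M * W) * μ |τ + 1| ^ (-ω) := by rw [hratio, hμτ, hWdef]; ring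
  have hIcoSum : (∑ τ ∈ Finset.Ico n m, μ |τ + 1| ^ (-ω)) ≤ N₁ := by
    have hinj : Set.InjOn (fun τ : ℤ => (m - 1 - τ).toNat) (Finset.Ico n m : Set ℤ) := by
      intro x hx y hy hxy
      simp only [Finset.coe_Ico, Set.mem_Ico] at hx hy
      have hxy' : (m - 1 - x).toNat = (m - 1 - y).toNat := hxy
      omega
    have heq : ∀ τ ∈ Finset.Ico n m,
        μ |τ + 1| ^ (-ω) = μ |m - (((m - 1 - τ).toNat : ℕ) : ℤ)| ^ (-ω) := by
      intro τ hτ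
      rw [Finset.mem_Ico] at hτ
      rw [Int.toNat_of_nonneg (by omega), show m - (m - 1 - τ) = τ + 1 from by ring]
    calc (∑ τ ∈ Finset.Ico n m, μ |τ + 1| ^ (-ω))
        = ∑ τ ∈ Finset.Ico n m, μ |m - (((m - 1 - τ).toNat : ℕ) : ℤ)| ^ (-ω) :=
          Finset.sum_congr rfl heq
      _ = ∑ j ∈ (Finset.Ico n m).image (fun τ : ℤ => (m - 1 - τ).toNat),
            μ |m - (j : ℤ)| ^ (-ω) := (Finset.sum_image (f := fun j : ℕ => μ |m - (j : ℤ)| ^ (-ω))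
            (fun x hx y hy => hinj hx hy)).symm
      _ ≤ ∑' j : ℕ, μ |m - j| ^ (-ω) :=
          Summable.sum_le_tsum _ (fun j _ => (Real.rpow_pos_of_pos (hμpos _) _).le) (hN₁ m).1
      _ ≤ N₁ := hsum1
  have hSbound : ‖∑ τ ∈ Finset.Ico n m, (𝓐 m (τ + 1)).comp ((P (τ + 1)).comp
      ((C τ).comp (V τ n)))‖ ≤ K * γ * M * W * N₁ := by
    calc ‖∑ τ ∈ Finset.Ico n m, (𝓐 m (τ + 1)).comp ((P (τ + 1)).comp ((C τ).comp (V τ n)))‖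
        ≤ ∑ τ ∈ Finset.Ico n m, ‖(𝓐 m (τ + 1)).comp ((P (τ + 1)).comp ((C τ).comp (V τ n)))‖ :=
          norm_sum_le _ _
      _ ≤ ∑ τ ∈ Finset.Ico n m, (K * γ * M * W) * μ |τ + 1| ^ (-ω) :=
          Finset.sum_le_sum hterm
      _ = (K * γ * M * W) * ∑ τ ∈ Finset.Ico n m, μ |τ + 1| ^ (-ω) := by
          rw [Finset.mul_sum]
      _ ≤ K * γ * M * W * N₁ := by
          apply mul_le_mul_of_nonneg_left hIcoSum
          positivity
  calc ‖(∑ τ ∈ Finset.Ico n m, (𝓐 m (τ + 1)).comp ((P (τ + 1)).comp ((C τ).comp (V τ n))))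
      - ∑' τ : ℕ, f τ‖
      ≤ ‖∑ τ ∈ Finset.Ico n m, (𝓐 m (τ + 1)).comp ((P (τ + 1)).comp ((C τ).comp (V τ n)))‖
        + ‖∑' τ : ℕ, f τ‖ := norm_sub_le _ _
    _ ≤ K * γ * M * W * N₁ + K * γ * M * W * N₂ := add_le_add hSbound hTbound
    _ = K * γ * M * (N₁ + N₂) * W := by ring

end KeyEst

theorem stmt12 {X : Type*} [NormedAddCommGroup X] [NormedSpace ℝ X] [CompleteSpace X]
    {Λ : Type*} [NormedAddCommGroup Λ]
    (𝓐 : ℤ → ℤ → X →L[ℝ] X)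
    (hcoc : ∀ m n k : ℤ, (𝓐 m n).comp (𝓐 n k) = 𝓐 m k)
    (hid : ∀ n : ℤ, 𝓐 n n = ContinuousLinearMap.id ℝ X)
    (P : ℤ → X →L[ℝ] X)
    (hproj : ∀ n, (P n).comp (P n) = P n)
    (hcomm : ∀ m n, (P m).comp (𝓐 m n) = (𝓐 m n).comp (P n))
    (h k μ ν : ℤ → ℝ) (hh : IsGrowthRate h) (hk : IsGrowthRate k)
    (hμ : IsGrowthRate μ) (hν : IsGrowthRate ν)
    (K a b ε : ℝ) (hK : 0 < K) (ha : a < 0) (hb : 0 ≤ b) (hε : 0 ≤ ε)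
    (hbound1 : ∀ m n, n ≤ m → ‖(𝓐 m n).comp (P n)‖ ≤ K * (h m / h n) ^ a * μ |n| ^ ε)
    (hbound2 : ∀ m n, m ≤ n →
      ‖(𝓐 m n).comp (ContinuousLinearMap.id ℝ X - P n)‖ ≤ K * (k n / k m) ^ (-b) * ν |n| ^ ε)
    (hlim1 : Tendsto (fun m : ℤ => k m ^ (-b) * ν |m| ^ ε) atTop (nhds 0))
    (hlim2 : Tendsto (fun m : ℤ => h m ^ (-a) * μ |m| ^ ε) atBot (nhds 0))
    (B : Λ → ℤ → X →L[ℝ] X) (c ω : ℝ) (hc : 0 < c) (hω : 1 < ω)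
    (hB : ∀ (lam : Λ) (m : ℤ), ‖B lam m‖ ≤
      c * min ((h (m + 1) / h m) ^ a * μ |m + 1| ^ (-(ω + ε))) (ν |m + 1| ^ (-(ω + ε))))
    (hBlip : ∀ (lam₁ lam₂ : Λ) (m : ℤ), ‖B lam₁ m - B lam₂ m‖ ≤ c * ‖lam₁ - lam₂‖ *
      min ((h (m + 1) / h m) ^ a * μ |m + 1| ^ (-(ω + ε))) (ν |m + 1| ^ (-(ω + ε))))
    (N₁ N₂ : ℝ)
    (hN₁ : ∀ m : ℤ, Summable (fun τ : ℕ => μ |m - τ| ^ (-ω)) ∧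
      (∑' τ : ℕ, μ |m - τ| ^ (-ω)) * ν |m| ^ ε ≤ N₁)
    (hN₂ : ∀ m : ℤ, Summable (fun τ : ℕ => ν |m + τ + 1| ^ (-ω)) ∧
      μ |m| ^ ε * (∑' τ : ℕ, ν |m + τ + 1| ^ (-ω)) ≤ N₂)
    (hcsmall : c < (K * (2 * K + 1) * (N₁ + N₂))⁻¹)
    (U : Λ → ℤ → ℤ → X →L[ℝ] X)
    (hUΩ : ∀ lam, InOmega h μ a ε (U lam))
    (hfix : ∀ lam, ∀ m n : ℤ, n ≤ m → Jop 𝓐 P (B lam) (U lam) m n = U lam m n)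
    (hUbd : ∀ lam, ∀ m n : ℤ, n ≤ m →
      ‖U lam m n‖ ≤ (K / (1 - K * c * (N₁ + N₂))) * (h m / h n) ^ a * μ |n| ^ ε) :
    ∀ lam₁ lam₂ : Λ,
      norm1 h μ a ε (fun m n => U lam₁ m n - U lam₂ m n)
        ≤ ((K / (1 - K * c * (N₁ + N₂))) * K * c * (N₁ + N₂) / (1 - K * c * (N₁ + N₂)))
            * ‖lam₁ - lam₂‖ := by
  intro lam₁ lam₂
  have hhpos := growth_pos hh
  have hkpos := growth_pos hk
  have hμpos := growth_pos hμ
  have hνpos := growth_pos hν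
  have hμ1 := growth_one_le hμ
  have hν1 := growth_one_le hν
  have hbound2' : ∀ m n, m ≤ n →
      ‖(𝓐 m n).comp (ContinuousLinearMap.id ℝ X - P n)‖ ≤ K * ν |n| ^ ε := by
    intro m n hmn
    have h1 := hbound2 m n hmn
    have h2 : (k n / k m) ^ (-b) ≤ 1 :=
      Real.rpow_le_one_of_one_le_of_nonpos
        ((one_le_div (hkpos m)).mpr (hk.1.monotone hmn)) (by linarith)
    have h3 : K * (k n / k m) ^ (-b) * ν |n| ^ ε ≤ K * 1 * ν |n| ^ ε := by
      apply mul_le_mul_of_nonneg_right _ (Real.rpow_pos_of_pos (hνpos _) _).le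
      exact mul_le_mul_of_nonneg_left h2 hK.le
    calc ‖(𝓐 m n).comp (ContinuousLinearMap.id ℝ X - P n)‖
        ≤ K * (k n / k m) ^ (-b) * ν |n| ^ ε := h1
      _ ≤ K * 1 * ν |n| ^ ε := h3
      _ = K * ν |n| ^ ε := by ring
  -- N₁ ≥ 1, N₂ ≥ 0
  have hN1ge : (1:ℝ) ≤ N₁ := by
    have h1 := (hN₁ 0).2
    have h2 : μ |(0:ℤ) - ((0:ℕ):ℤ)| ^ (-ω) = 1 := by
      norm_num [hμ.2.1]
    have h3 : μ |(0:ℤ) - ((0:ℕ):ℤ)| ^ (-ω) ≤ ∑' τ : ℕ, μ |(0:ℤ) - (τ:ℤ)| ^ (-ω) :=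
      Summable.le_tsum (hN₁ 0).1 0 (fun j _ => (Real.rpow_pos_of_pos (hμpos _) _).le)
    have h4 : ν |(0:ℤ)| ^ ε = 1 := by norm_num [hν.2.1]
    rw [h2] at h3
    rw [h4, mul_one] at h1
    linarith
  have hN2ge : (0:ℝ) ≤ N₂ :=
    le_trans (mul_nonneg (Real.rpow_pos_of_pos (hμpos _) _).le
      (tsum_nonneg fun τ => (Real.rpow_pos_of_pos (hνpos _) _).le)) (hN₂ 0).2
  have hNpos : (0:ℝ) < N₁ + N₂ := by linarith
  have hz : (0:ℝ) < K * (2 * K + 1) * (N₁ + N₂) :=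
    mul_pos (mul_pos hK (by linarith)) hNpos
  have hcz : c * (K * (2 * K + 1) * (N₁ + N₂)) < 1 := by
    have := mul_lt_mul_of_pos_right hcsmall hz
    rwa [inv_mul_cancel₀ hz.ne'] at this
  have hθpos : 0 < K * c * (N₁ + N₂) := mul_pos (mul_pos hK hc) hNpos
  have hθ : K * c * (N₁ + N₂) < 1 := by nlinarith
  have h1θ : 0 < 1 - K * c * (N₁ + N₂) := by linarith
  set Kh := K / (1 - K * c * (N₁ + N₂)) with hKh_def
  have hKhpos : 0 < Kh := div_pos hK h1θ
  set Δ : ℤ → ℤ → X →L[ℝ] X := fun m n => U lam₁ m n - U lam₂ m n with hΔ_def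
  -- weight cancellation
  have hWt : ∀ m n : ℤ,
      ((h m / h n) ^ a * μ |n| ^ ε) * ((h m / h n) ^ (-a) * μ |n| ^ (-ε)) = 1 := by
    intro m n
    rw [Real.rpow_neg (div_pos (hhpos m) (hhpos n)).le, Real.rpow_neg (hμpos _).le,
      mul_mul_mul_comm,
      mul_inv_cancel₀ (Real.rpow_pos_of_pos (div_pos (hhpos m) (hhpos n)) a).ne',
      mul_inv_cancel₀ (Real.rpow_pos_of_pos (hμpos _) ε).ne', one_mul]
  have habove : ∀ (V : ℤ → ℤ → X →L[ℝ] X) (Cst : ℝ),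
      (∀ m n : ℤ, n ≤ m → ‖V m n‖ ≤ Cst * ((h m / h n) ^ a * μ |n| ^ ε)) →
      ∀ x ∈ weightSet h μ a ε V, x ≤ Cst := by
    rintro V Cst hbd x ⟨⟨m, n⟩, hp, rfl⟩
    simp only [Set.mem_setOf_eq] at hp
    have h1 := hbd m n hp
    have ht : (0:ℝ) ≤ (h m / h n) ^ (-a) * μ |n| ^ (-ε) :=
      mul_nonneg (Real.rpow_pos_of_pos (div_pos (hhpos m) (hhpos n)) _).le
        (Real.rpow_pos_of_pos (hμpos _) _).le
    calc ‖V m n‖ * (h m / h n) ^ (-a) * μ |n| ^ (-ε)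
        = ‖V m n‖ * ((h m / h n) ^ (-a) * μ |n| ^ (-ε)) := by ring
      _ ≤ (Cst * ((h m / h n) ^ a * μ |n| ^ ε)) * ((h m / h n) ^ (-a) * μ |n| ^ (-ε)) :=
          mul_le_mul_of_nonneg_right h1 ht
      _ = Cst * (((h m / h n) ^ a * μ |n| ^ ε) * ((h m / h n) ^ (-a) * μ |n| ^ (-ε))) := by
          ring
      _ = Cst := by rw [hWt m n, mul_one]
  have hΔbd2 : ∀ m n : ℤ, n ≤ m → ‖Δ m n‖ ≤ (2 * Kh) * ((h m / h n) ^ a * μ |n| ^ ε) := by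
    intro m n hmn
    have h1 := hUbd lam₁ m n hmn
    have h2 := hUbd lam₂ m n hmn
    calc ‖Δ m n‖ ≤ ‖U lam₁ m n‖ + ‖U lam₂ m n‖ := norm_sub_le _ _
      _ ≤ Kh * (h m / h n) ^ a * μ |n| ^ ε + Kh * (h m / h n) ^ a * μ |n| ^ ε :=
          add_le_add h1 h2
      _ = (2 * Kh) * ((h m / h n) ^ a * μ |n| ^ ε) := by ring
  have hbdd : BddAbove (weightSet h μ a ε Δ) := ⟨2 * Kh, fun x hx => habove Δ (2 * Kh) hΔbd2 x hx⟩
  set D := norm1 h μ a ε Δ with hD_def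
  have hD0 : 0 ≤ D := by
    have hmem : ‖Δ 0 0‖ * (h 0 / h 0) ^ (-a) * μ |(0:ℤ)| ^ (-ε) ∈ weightSet h μ a ε Δ :=
      ⟨(0, 0), le_refl (0:ℤ), rfl⟩
    have h1 : ‖Δ 0 0‖ * (h 0 / h 0) ^ (-a) * μ |(0:ℤ)| ^ (-ε) ≤ D := le_csSup hbdd hmem
    have h2 : (0:ℝ) ≤ ‖Δ 0 0‖ * (h 0 / h 0) ^ (-a) * μ |(0:ℤ)| ^ (-ε) :=
      mul_nonneg (mul_nonneg (norm_nonneg _)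
        (Real.rpow_pos_of_pos (div_pos (hhpos 0) (hhpos 0)) _).le)
        (Real.rpow_pos_of_pos (hμpos _) _).le
    linarith
  have hDle : ∀ m n : ℤ, n ≤ m → ‖Δ m n‖ ≤ D * (h m / h n) ^ a * μ |n| ^ ε := by
    intro m n hmn
    have hmem : ‖Δ m n‖ * (h m / h n) ^ (-a) * μ |n| ^ (-ε) ∈ weightSet h μ a ε Δ :=
      ⟨(m, n), hmn, rfl⟩
    have h1 : ‖Δ m n‖ * (h m / h n) ^ (-a) * μ |n| ^ (-ε) ≤ D := le_csSup hbdd hmem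
    have heq : (‖Δ m n‖ * (h m / h n) ^ (-a) * μ |n| ^ (-ε)) * ((h m / h n) ^ a * μ |n| ^ ε)
        = ‖Δ m n‖ := by
      calc (‖Δ m n‖ * (h m / h n) ^ (-a) * μ |n| ^ (-ε)) * ((h m / h n) ^ a * μ |n| ^ ε)
          = ‖Δ m n‖ * (((h m / h n) ^ a * μ |n| ^ ε)
            * ((h m / h n) ^ (-a) * μ |n| ^ (-ε))) := by ring
        _ = ‖Δ m n‖ := by rw [hWt m n, mul_one]
    have hWnn : (0:ℝ) ≤ (h m / h n) ^ a * μ |n| ^ ε :=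
      mul_nonneg (Real.rpow_pos_of_pos (div_pos (hhpos m) (hhpos n)) _).le
        (Real.rpow_pos_of_pos (hμpos _) _).le
    calc ‖Δ m n‖ = (‖Δ m n‖ * (h m / h n) ^ (-a) * μ |n| ^ (-ε))
          * ((h m / h n) ^ a * μ |n| ^ ε) := heq.symm
      _ ≤ D * ((h m / h n) ^ a * μ |n| ^ ε) := mul_le_mul_of_nonneg_right h1 hWnn
      _ = D * (h m / h n) ^ a * μ |n| ^ ε := by ring
  -- the four applications of keyEst
  have keyE := fun (C : ℤ → X →L[ℝ] X) (γ : ℝ) (hγ : 0 ≤ γ)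
      (hC : ∀ m, ‖C m‖ ≤ γ * min ((h (m + 1) / h m) ^ a * μ |m + 1| ^ (-(ω + ε)))
        (ν |m + 1| ^ (-(ω + ε))))
      (V : ℤ → ℤ → X →L[ℝ] X) (M : ℝ) (hM : 0 ≤ M)
      (hV : ∀ m n, n ≤ m → ‖V m n‖ ≤ M * (h m / h n) ^ a * μ |n| ^ ε) =>
    keyEst 𝓐 P h μ ν hhpos hh.1.monotone hμpos hνpos hμ1 hν1 K a ε ω hK ha.le hε
      hbound1 hbound2' C γ hγ hC V M hM hV N₁ N₂ hN₁ hN₂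
  have hcL : (0:ℝ) ≤ c * ‖lam₁ - lam₂‖ := mul_nonneg hc.le (norm_nonneg _)
  have E₁ := keyE (fun τ => B lam₁ τ - B lam₂ τ) (c * ‖lam₁ - lam₂‖) hcL
    (fun m => hBlip lam₁ lam₂ m) (U lam₁) Kh hKhpos.le (hUbd lam₁)
  have E₂ := keyE (B lam₂) c hc.le (hB lam₂) Δ D hD0 hDle
  have EU₁ := keyE (B lam₁) c hc.le (hB lam₁) (U lam₁) Kh hKhpos.le (hUbd lam₁)
  have EU₂ := keyE (B lam₂) c hc.le (hB lam₂) (U lam₂) Kh hKhpos.le (hUbd lam₂)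
  -- decomposition of the difference
  have hdecomp : ∀ m n : ℤ, n ≤ m → Δ m n =
      ((∑ τ ∈ Finset.Ico n m, (𝓐 m (τ + 1)).comp ((P (τ + 1)).comp
          (((fun τ => B lam₁ τ - B lam₂ τ) τ).comp (U lam₁ τ n))))
        - ∑' τ : ℕ, (𝓐 m (m + τ + 1)).comp
          ((ContinuousLinearMap.id ℝ X - P (m + τ + 1)).comp
            (((fun τ => B lam₁ τ - B lam₂ τ) (m + τ)).comp (U lam₁ (m + τ) n))))
      + ((∑ τ ∈ Finset.Ico n m, (𝓐 m (τ + 1)).comp ((P (τ + 1)).comp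
          ((B lam₂ τ).comp (Δ τ n))))
        - ∑' τ : ℕ, (𝓐 m (m + τ + 1)).comp
          ((ContinuousLinearMap.id ℝ X - P (m + τ + 1)).comp
            ((B lam₂ (m + τ)).comp (Δ (m + τ) n)))) := by
    intro m n hmn
    have e₁ := hfix lam₁ m n hmn
    have e₂ := hfix lam₂ m n hmn
    have hΔeq : Δ m n = Jop 𝓐 P (B lam₁) (U lam₁) m n - Jop 𝓐 P (B lam₂) (U lam₂) m n := by
      rw [e₁, e₂]
    rw [hΔeq]
    unfold Jop
    have hS : (∑ τ ∈ Finset.Ico n m, (𝓐 m (τ + 1)).comp ((P (τ + 1)).comp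
          ((B lam₁ τ).comp (U lam₁ τ n))))
        - (∑ τ ∈ Finset.Ico n m, (𝓐 m (τ + 1)).comp ((P (τ + 1)).comp
          ((B lam₂ τ).comp (U lam₂ τ n))))
        = (∑ τ ∈ Finset.Ico n m, (𝓐 m (τ + 1)).comp ((P (τ + 1)).comp
          (((fun τ => B lam₁ τ - B lam₂ τ) τ).comp (U lam₁ τ n))))
        + (∑ τ ∈ Finset.Ico n m, (𝓐 m (τ + 1)).comp ((P (τ + 1)).comp
          ((B lam₂ τ).comp (Δ τ n)))) := by
      rw [← Finset.sum_sub_distrib, ← Finset.sum_add_distrib]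
      refine Finset.sum_congr rfl fun τ _ => ?_
      simp only [hΔ_def, ContinuousLinearMap.sub_comp, ContinuousLinearMap.comp_sub]
      abel
    have hT : (∑' τ : ℕ, (𝓐 m (m + τ + 1)).comp
          ((ContinuousLinearMap.id ℝ X - P (m + τ + 1)).comp
            ((B lam₁ (m + τ)).comp (U lam₁ (m + τ) n))))
        - (∑' τ : ℕ, (𝓐 m (m + τ + 1)).comp
          ((ContinuousLinearMap.id ℝ X - P (m + τ + 1)).comp
            ((B lam₂ (m + τ)).comp (U lam₂ (m + τ) n))))
        = (∑' τ : ℕ, (𝓐 m (m + τ + 1)).comp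
          ((ContinuousLinearMap.id ℝ X - P (m + τ + 1)).comp
            (((fun τ => B lam₁ τ - B lam₂ τ) (m + τ)).comp (U lam₁ (m + τ) n))))
        + (∑' τ : ℕ, (𝓐 m (m + τ + 1)).comp
          ((ContinuousLinearMap.id ℝ X - P (m + τ + 1)).comp
            ((B lam₂ (m + τ)).comp (Δ (m + τ) n)))) := by
      rw [← Summable.tsum_sub ((EU₁ m n hmn).1) ((EU₂ m n hmn).1),
        ← Summable.tsum_add ((E₁ m n hmn).1) ((E₂ m n hmn).1)]
      congr 1
      funext τ
      simp only [hΔ_def, ContinuousLinearMap.sub_comp, ContinuousLinearMap.comp_sub]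
      abel
    rw [sub_sub_sub_comm, add_sub_add_comm, hS, hT]
    abel
  -- the pointwise bound
  set CC := K * (c * ‖lam₁ - lam₂‖) * Kh * (N₁ + N₂) + K * c * D * (N₁ + N₂) with hCC_def
  have hCC0 : 0 ≤ CC := by
    have : (0:ℝ) ≤ K * (c * ‖lam₁ - lam₂‖) * Kh * (N₁ + N₂) :=
      mul_nonneg (mul_nonneg (mul_nonneg hK.le hcL) hKhpos.le) hNpos.le
    have : (0:ℝ) ≤ K * c * D * (N₁ + N₂) :=
      mul_nonneg (mul_nonneg (mul_pos hK hc).le hD0) hNpos.le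
    rw [hCC_def]
    linarith [mul_nonneg (mul_nonneg (mul_nonneg hK.le hcL) hKhpos.le) hNpos.le]
  have hkey : ∀ m n : ℤ, n ≤ m → ‖Δ m n‖ ≤ CC * ((h m / h n) ^ a * μ |n| ^ ε) := by
    intro m n hmn
    have b₁ := (E₁ m n hmn).2
    have b₂ := (E₂ m n hmn).2
    rw [hdecomp m n hmn]
    calc ‖_ + _‖ ≤ _ + _ := norm_add_le _ _
      _ ≤ K * (c * ‖lam₁ - lam₂‖) * Kh * (N₁ + N₂) * ((h m / h n) ^ a * μ |n| ^ ε)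
          + K * c * D * (N₁ + N₂) * ((h m / h n) ^ a * μ |n| ^ ε) := add_le_add b₁ b₂
      _ = CC * ((h m / h n) ^ a * μ |n| ^ ε) := by rw [hCC_def]; ring
  have hDCC : D ≤ CC := by
    rw [hD_def]
    exact Real.sSup_le (fun x hx => habove Δ CC hkey x hx) hCC0
  -- conclude
  rw [hD_def] at hDCC hD0
  rw [div_mul_eq_mul_div, le_div_iff₀ h1θ]
  rw [hCC_def] at hDCC
  nlinarith [hDCC]
end

section
/- Let X be a Banach space and P, Q ∈ B(X) with P + Q = id. Suppose P̂, Q̂ ∈ B(X) with P̂ + Q̂ = id and there are constants θ ∈ [0, 1/2), c_P, c_Q ≥ 0 such that ‖Q P̂‖ ≤ θ ‖P̂‖, ‖P Q̂‖ ≤ θ ‖Q̂‖, ‖P‖ ≤ c_P, ‖Q‖ ≤ c_Q. Then ‖P̂‖ + ‖Q̂‖ ≤ (c_P + c_Q)/(1 − 2θ), and in particular ‖P̂‖ ≤ (c_P + c_Q)/(1 − 2θ). -/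
theorem stmt19 {X : Type*} [NormedAddCommGroup X] [NormedSpace ℝ X] [CompleteSpace X]
    (P Q Phat Qhat : X →L[ℝ] X)
    (hPQ : P + Q = 1) (hhat : Phat + Qhat = 1)
    (θ cP cQ : ℝ) (hθ0 : 0 ≤ θ) (hθ : θ < 1 / 2) (hcP : 0 ≤ cP) (hcQ : 0 ≤ cQ)
    (h1 : ‖Q.comp Phat‖ ≤ θ * ‖Phat‖) (h2 : ‖P.comp Qhat‖ ≤ θ * ‖Qhat‖)
    (h3 : ‖P‖ ≤ cP) (h4 : ‖Q‖ ≤ cQ) :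
    ‖Phat‖ + ‖Qhat‖ ≤ (cP + cQ) / (1 - 2 * θ) ∧ ‖Phat‖ ≤ (cP + cQ) / (1 - 2 * θ) := by
  have hQ : Q = 1 - P := eq_sub_of_add_eq' hPQ
  have hQh : Qhat = 1 - Phat := eq_sub_of_add_eq' hhat
  have e1 : Phat - P = Q.comp Phat - P.comp Qhat := by
    simp only [← ContinuousLinearMap.mul_def, hQ, hQh]; noncomm_ring
  have e2 : Qhat - Q = P.comp Qhat - Q.comp Phat := by
    simp only [← ContinuousLinearMap.mul_def, hQ, hQh]; noncomm_ring
  have hp : ‖Phat‖ ≤ θ * ‖Phat‖ + θ * ‖Qhat‖ + cP := by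
    calc ‖Phat‖ = ‖(Phat - P) + P‖ := by rw [sub_add_cancel]
      _ ≤ ‖Phat - P‖ + ‖P‖ := norm_add_le _ _
      _ = ‖Q.comp Phat - P.comp Qhat‖ + ‖P‖ := by rw [e1]
      _ ≤ (‖Q.comp Phat‖ + ‖P.comp Qhat‖) + ‖P‖ := by
          gcongr; exact norm_sub_le _ _
      _ ≤ θ * ‖Phat‖ + θ * ‖Qhat‖ + cP := by linarith
  have hq : ‖Qhat‖ ≤ θ * ‖Phat‖ + θ * ‖Qhat‖ + cQ := by
    calc ‖Qhat‖ = ‖(Qhat - Q) + Q‖ := by rw [sub_add_cancel]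
      _ ≤ ‖Qhat - Q‖ + ‖Q‖ := norm_add_le _ _
      _ = ‖P.comp Qhat - Q.comp Phat‖ + ‖Q‖ := by rw [e2]
      _ ≤ (‖P.comp Qhat‖ + ‖Q.comp Phat‖) + ‖Q‖ := by
          gcongr; exact norm_sub_le _ _
      _ ≤ θ * ‖Phat‖ + θ * ‖Qhat‖ + cQ := by linarith
  have hpos : 0 < 1 - 2 * θ := by linarith
  have hS : ‖Phat‖ + ‖Qhat‖ ≤ (cP + cQ) / (1 - 2 * θ) := by
    rw [le_div_iff₀ hpos]; nlinarith
  exact ⟨hS, le_trans (by linarith [norm_nonneg Qhat]) hS⟩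
end
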